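/- A graph G has a mixed dominating set of size at most k if and only if the incidence graph I(G) (the 1-subdivision of G) has a distance-2 dominating set of size at most k. -/

import Mathlib

/-!
A set `S` of vertices of `I(G)` splits as `D = S ∩ V` and `M = S ∩ E` with `|S| = |D| + |M|`.
In `I(G)`, a vertex `v` is within distance 2 of a vertex `u` iff `u = v` or `uv ∈ E`, and of an
edge `f` iff `v ∈ f`; an edge `e` is within distance 2 of a vertex `u` iff `u ∈ e`, and of an
edge `f` iff `f = e` or `f` and `e` share an endpoint. Read through this dictionary, distance-2
domination of `I(G)` by `S` is exactly mixed domination of `G` by `(D, M)`.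
-/

variable {V : Type*} [Fintype V] [DecidableEq V]

/-- The set of endpoints of an edge set `M`, i.e. `V(M)`. -/
def mVerts (M : Finset (Sym2 V)) : Finset V :=
  Finset.univ.filter fun v => ∃ e ∈ M, v ∈ e

/-- `D ∪ M` is a mixed dominating set of `G`: every vertex outside `D ∪ V(M)` has a
neighbor in `D`, and every edge outside `M` has an endpoint in `D ∪ V(M)`. -/
def IsMDS (G : SimpleGraph V) (D : Finset V) (M : Finset (Sym2 V)) : Prop :=
  (∀ e ∈ M, e ∈ G.edgeSet) ∧
  (∀ v : V, v ∉ D → v ∉ mVerts M → ∃ u ∈ D, G.Adj u v) ∧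
  (∀ e ∈ G.edgeSet, e ∉ M → ∃ v, v ∈ e ∧ (v ∈ D ∨ v ∈ mVerts M))

/-- The incidence graph (1-subdivision) of `G`: vertices are `V ⊕ Sym2 V`, with
`v` adjacent to `e` iff `e` is an edge of `G` and `v` is an endpoint of `e`.
(Elements of `Sym2 V` that are not edges of `G` are isolated junk vertices.) -/
def incGraph {V : Type*} (G : SimpleGraph V) : SimpleGraph (V ⊕ Sym2 V) :=
  SimpleGraph.fromRel fun x y =>
    ∃ v e, x = Sum.inl v ∧ y = Sum.inr e ∧ e ∈ G.edgeSet ∧ v ∈ e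

/-- `x` is within distance 2 of `s` in `H`. -/
def within2 {α : Type*} (H : SimpleGraph α) (s x : α) : Prop :=
  s = x ∨ H.Adj s x ∨ ∃ y, H.Adj s y ∧ H.Adj y x

section IncidenceGraph

variable {W : Type*} {G : SimpleGraph W}

@[simp]
lemma incGraph_adj_inl_inr {v : W} {e : Sym2 W} :
    (incGraph G).Adj (Sum.inl v) (Sum.inr e) ↔ e ∈ G.edgeSet ∧ v ∈ e := by
  simp [incGraph]

@[simp]
lemma incGraph_adj_inr_inl {v : W} {e : Sym2 W} :
    (incGraph G).Adj (Sum.inr e) (Sum.inl v) ↔ e ∈ G.edgeSet ∧ v ∈ e := by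
  simp [incGraph]

@[simp]
lemma incGraph_not_adj_inl_inl {u v : W} : ¬ (incGraph G).Adj (Sum.inl u) (Sum.inl v) := by
  simp [incGraph]

@[simp]
lemma incGraph_not_adj_inr_inr {e f : Sym2 W} : ¬ (incGraph G).Adj (Sum.inr e) (Sum.inr f) := by
  simp [incGraph]

lemma within2_incGraph_inl_inl {u v : W} :
    within2 (incGraph G) (Sum.inl u) (Sum.inl v) ↔ u = v ∨ G.Adj u v := by
  simp only [within2, Sum.exists, Sum.inl.injEq, incGraph_not_adj_inl_inl, incGraph_adj_inl_inr,
    incGraph_adj_inr_inl, false_and, false_or, exists_false]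
  rcases eq_or_ne u v with rfl | huv
  · simp
  simp only [huv, false_or]
  refine ⟨?_, fun hadj => ⟨s(u, v), by simpa⟩⟩
  rintro ⟨e, ⟨he, hu⟩, -, hv⟩
  rwa [(Sym2.mem_and_mem_iff huv).1 ⟨hu, hv⟩] at he

lemma within2_incGraph_inl_inr {v : W} {e : Sym2 W} :
    within2 (incGraph G) (Sum.inl v) (Sum.inr e) ↔ e ∈ G.edgeSet ∧ v ∈ e := by
  simp [within2, Sum.exists]

lemma within2_incGraph_inr_inl {v : W} {e : Sym2 W} :
    within2 (incGraph G) (Sum.inr e) (Sum.inl v) ↔ e ∈ G.edgeSet ∧ v ∈ e := by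
  simp [within2, Sum.exists]

lemma within2_incGraph_inr_inr {e f : Sym2 W} :
    within2 (incGraph G) (Sum.inr f) (Sum.inr e) ↔
      f = e ∨ f ∈ G.edgeSet ∧ e ∈ G.edgeSet ∧ ∃ v ∈ f, v ∈ e := by
  simp only [within2, Sum.exists, Sum.inr.injEq, incGraph_not_adj_inr_inr, incGraph_adj_inr_inl,
    incGraph_adj_inl_inr, false_or, and_false, exists_false, or_false]
  aesop

end IncidenceGraph

section MixedDomination

variable {G : SimpleGraph V}

@[simp]
lemma mem_mVerts {M : Finset (Sym2 V)} {v : V} : v ∈ mVerts M ↔ ∃ e ∈ M, v ∈ e := by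
  simp [mVerts]

lemma exists_mem_within2_inl_iff {S : Finset (V ⊕ Sym2 V)}
    (hS : ∀ e ∈ S.toRight, e ∈ G.edgeSet) (v : V) :
    (∃ s ∈ S, within2 (incGraph G) s (Sum.inl v)) ↔
      v ∈ S.toLeft ∨ v ∈ mVerts S.toRight ∨ ∃ u ∈ S.toLeft, G.Adj u v := by
  simp only [Sum.exists, within2_incGraph_inl_inl, within2_incGraph_inr_inl, mem_mVerts,
    Finset.mem_toLeft, Finset.mem_toRight] at hS ⊢
  grind

lemma exists_mem_within2_inr_iff {S : Finset (V ⊕ Sym2 V)}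
    (hS : ∀ e ∈ S.toRight, e ∈ G.edgeSet) {e : Sym2 V} (he : e ∈ G.edgeSet) :
    (∃ s ∈ S, within2 (incGraph G) s (Sum.inr e)) ↔
      e ∈ S.toRight ∨ ∃ v ∈ e, v ∈ S.toLeft ∨ v ∈ mVerts S.toRight := by
  simp only [Sum.exists, within2_incGraph_inl_inr, within2_incGraph_inr_inr, mem_mVerts,
    Finset.mem_toLeft, Finset.mem_toRight] at hS ⊢
  grind

lemma isMDS_toLeft_toRight_iff (S : Finset (V ⊕ Sym2 V)) :
    IsMDS G S.toLeft S.toRight ↔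
      (∀ x ∈ S, ∀ e : Sym2 V, x = Sum.inr e → e ∈ G.edgeSet) ∧
      (∀ v : V, ∃ s ∈ S, within2 (incGraph G) s (Sum.inl v)) ∧
      (∀ e ∈ G.edgeSet, ∃ s ∈ S, within2 (incGraph G) s (Sum.inr e)) := by
  have hedges : (∀ e ∈ S.toRight, e ∈ G.edgeSet) ↔
      ∀ x ∈ S, ∀ e : Sym2 V, x = Sum.inr e → e ∈ G.edgeSet := by
    simp
  rw [IsMDS, ← hedges]
  refine and_congr_right fun hS =>
    and_congr (forall_congr' fun v => ?_) (forall₂_congr fun e he => ?_)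
  · rw [exists_mem_within2_inl_iff hS, or_iff_not_imp_left, or_iff_not_imp_left]
  · rw [exists_mem_within2_inr_iff hS he, or_iff_not_imp_left]

end MixedDomination

/-- `G` has a mixed dominating set of size at most `k` iff the incidence graph
`I(G)` has a distance-2 dominating set of size at most `k`. -/
theorem stmt10 (G : SimpleGraph V) (k : ℕ) :
    (∃ (D : Finset V) (M : Finset (Sym2 V)), IsMDS G D M ∧ D.card + M.card ≤ k) ↔
    (∃ S : Finset (V ⊕ Sym2 V),
      (∀ x ∈ S, ∀ e : Sym2 V, x = Sum.inr e → e ∈ G.edgeSet) ∧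
      (∀ v : V, ∃ s ∈ S, within2 (incGraph G) s (Sum.inl v)) ∧
      (∀ e ∈ G.edgeSet, ∃ s ∈ S, within2 (incGraph G) s (Sum.inr e)) ∧
      S.card ≤ k) := by
  constructor
  · rintro ⟨D, M, hDM, hk⟩
    obtain ⟨hM, hV, hE⟩ :=
      (isMDS_toLeft_toRight_iff (D.disjSum M)).1 (by simpa using hDM)
    exact ⟨D.disjSum M, hM, hV, hE, by rwa [Finset.card_disjSum]⟩
  · rintro ⟨S, hM, hV, hE, hk⟩
    exact ⟨S.toLeft, S.toRight, (isMDS_toLeft_toRight_iff S).2 ⟨hM, hV, hE⟩,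
      by rwa [Finset.card_toLeft_add_card_toRight]⟩
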